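/- Let Ω, Θ be nonempty closed convex sets in R^n, ū ∈ S_2 a maximizer of d(·;Θ) over Ω, v̄ = P(ū; Θ), and t ≥ 0, x̄ = ū + t(ū − v̄). Then P(x̄; Θ) = v̄ and P(x̄; Ω) = ū, and f(x̄) = f(ū) where f(x) = d(x; Ω) − d(x; Θ). -/

import Mathlib

open Classical in
noncomputable def proj (n : ℕ) (Q : Set (EuclideanSpace ℝ (Fin n)))
    (x : EuclideanSpace ℝ (Fin n)) : EuclideanSpace ℝ (Fin n) :=
  if h : ∃ p ∈ Q, dist x p = Metric.infDist x Q then h.choose else x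

/-!
The nearest point `v̄` of `Θ` to `ū` is characterised by `⟪ū - v̄, w - v̄⟫ ≤ 0` on `Θ`, and
this inequality survives scaling `ū - v̄` by `1 + t`, so `v̄` stays the nearest point to `x̄`.
Maximality of `d(·; Θ)` at `ū` puts `Ω` in the half-space `⟪ū - v̄, u - ū⟫ ≤ 0`: if `w ∈ Θ`
is nearest to `u ∈ Ω`, then `‖u - w‖ ≤ ‖ū - v̄‖`, and expanding
`u - w = (u - ū) + (ū - v̄) + (v̄ - w)` gives the claim. Hence `ū` is the nearest point of `Ω`
to `x̄`, and `f(x̄) = t‖ū - v̄‖ - (1 + t)‖ū - v̄‖ = f(ū)`.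
-/

open RealInnerProductSpace

section InnerProductSpace

variable {F : Type*} [NormedAddCommGroup F] [InnerProductSpace ℝ F]

theorem dist_eq_infDist_iff_inner_sub_nonpos {K : Set F} (hK : Convex ℝ K) {x p : F}
    (hp : p ∈ K) : dist x p = Metric.infDist x K ↔ ∀ w ∈ K, ⟪x - p, w - p⟫ ≤ 0 := by
  rw [← norm_eq_iInf_iff_real_inner_le_zero hK hp, Metric.infDist_eq_iInf, dist_eq_norm]
  simp_rw [dist_eq_norm]

theorem eq_of_inner_sub_nonpos_of_inner_sub_nonpos {x p q : F}
    (hp : ⟪x - p, q - p⟫ ≤ 0) (hq : ⟪x - q, p - q⟫ ≤ 0) : p = q := by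
  have hsum : ⟪x - p, q - p⟫ + ⟪x - q, p - q⟫ = ‖q - p‖ ^ 2 := by
    rw [← neg_sub q p, inner_neg_right, ← sub_eq_add_neg, ← inner_sub_left,
      sub_sub_sub_cancel_left, real_inner_self_eq_norm_sq]
  have : ‖q - p‖ = 0 := by nlinarith [norm_nonneg (q - p)]
  exact (sub_eq_zero.mp (norm_eq_zero.mp this)).symm

theorem inner_sub_nonpos_of_norm_sub_le {a v u w : F} (hv : ⟪a - v, w - v⟫ ≤ 0)
    (hw : ‖u - w‖ ≤ ‖a - v‖) : ⟪a - v, u - a⟫ ≤ 0 := by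
  have hsplit : ⟪a - v, u - w⟫ = ⟪a - v, u - a⟫ + ‖a - v‖ ^ 2 - ⟪a - v, w - v⟫ := by
    rw [← real_inner_self_eq_norm_sq, ← inner_add_right, ← inner_sub_right]
    congr 1
    abel
  have hcs : ⟪a - v, u - w⟫ ≤ ‖a - v‖ * ‖u - w‖ := real_inner_le_norm _ _
  nlinarith [norm_nonneg (a - v)]

end InnerProductSpace

section Proj

variable {n : ℕ} {Q : Set (EuclideanSpace ℝ (Fin n))}

theorem proj_mem_and_dist_eq (hc : IsClosed Q) (hne : Q.Nonempty)
    (x : EuclideanSpace ℝ (Fin n)) :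
    proj n Q x ∈ Q ∧ dist x (proj n Q x) = Metric.infDist x Q := by
  have h : ∃ p ∈ Q, dist x p = Metric.infDist x Q := by
    obtain ⟨p, hp, hd⟩ := hc.exists_infDist_eq_dist hne x
    exact ⟨p, hp, hd.symm⟩
  rw [proj, dif_pos h]
  exact h.choose_spec

theorem inner_sub_proj_nonpos (hc : IsClosed Q) (hconv : Convex ℝ Q) (hne : Q.Nonempty)
    (x : EuclideanSpace ℝ (Fin n)) : ∀ w ∈ Q, ⟪x - proj n Q x, w - proj n Q x⟫ ≤ 0 :=
  let ⟨hmem, hdist⟩ := proj_mem_and_dist_eq hc hne x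
  (dist_eq_infDist_iff_inner_sub_nonpos hconv hmem).mp hdist

theorem proj_eq_of_inner_sub_nonpos (hc : IsClosed Q) (hconv : Convex ℝ Q)
    {x p : EuclideanSpace ℝ (Fin n)} (hp : p ∈ Q) (hvar : ∀ w ∈ Q, ⟪x - p, w - p⟫ ≤ 0) :
    proj n Q x = p :=
  have hne : Q.Nonempty := ⟨p, hp⟩
  eq_of_inner_sub_nonpos_of_inner_sub_nonpos
    (inner_sub_proj_nonpos hc hconv hne x p hp) (hvar _ (proj_mem_and_dist_eq hc hne x).1)

theorem infDist_eq_norm_sub_of_proj_eq (hc : IsClosed Q) (hne : Q.Nonempty)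
    {x p : EuclideanSpace ℝ (Fin n)} (hp : proj n Q x = p) :
    Metric.infDist x Q = ‖x - p‖ := by
  rw [← (proj_mem_and_dist_eq hc hne x).2, hp, dist_eq_norm]

end Proj

theorem ray_points_properties_general (n : ℕ)
    (Ω Θ : Set (EuclideanSpace ℝ (Fin n)))
    (hΩc : IsClosed Ω) (hΩconv : Convex ℝ Ω)
    (hΘ : Θ.Nonempty) (hΘc : IsClosed Θ) (hΘconv : Convex ℝ Θ)
    (f : EuclideanSpace ℝ (Fin n) → ℝ)
    (hf : ∀ x, f x = Metric.infDist x Ω - Metric.infDist x Θ)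
    (ub : EuclideanSpace ℝ (Fin n)) (hub : ub ∈ Ω)
    (hmax : ∀ u ∈ Ω, Metric.infDist u Θ ≤ Metric.infDist ub Θ)
    (vb : EuclideanSpace ℝ (Fin n)) (hvb : vb = proj n Θ ub)
    (t : ℝ) (ht : 0 ≤ t)
    (xb : EuclideanSpace ℝ (Fin n)) (hxb : xb = ub + t • (ub - vb)) :
    proj n Θ xb = vb ∧ proj n Ω xb = ub ∧ f xb = f ub := by
  have hvbΘ : vb ∈ Θ := hvb ▸ (proj_mem_and_dist_eq hΘc hΘ ub).1
  have hvarΘ : ∀ w ∈ Θ, ⟪ub - vb, w - vb⟫ ≤ 0 :=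
    hvb ▸ inner_sub_proj_nonpos hΘc hΘconv hΘ ub
  have hxv : xb - vb = (1 + t) • (ub - vb) := by rw [hxb, add_smul, one_smul]; abel
  have hxu : xb - ub = t • (ub - vb) := by rw [hxb]; abel
  have hΘxb : proj n Θ xb = vb := proj_eq_of_inner_sub_nonpos hΘc hΘconv hvbΘ fun w hw => by
    rw [hxv, real_inner_smul_left]
    exact mul_nonpos_of_nonneg_of_nonpos (by linarith) (hvarΘ w hw)
  have hΩhalf : ∀ u ∈ Ω, ⟪ub - vb, u - ub⟫ ≤ 0 := fun u hu =>
    inner_sub_nonpos_of_norm_sub_le (hvarΘ _ (proj_mem_and_dist_eq hΘc hΘ u).1) <| by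
      rw [← infDist_eq_norm_sub_of_proj_eq hΘc hΘ rfl,
        ← infDist_eq_norm_sub_of_proj_eq hΘc hΘ hvb.symm]
      exact hmax u hu
  have hΩxb : proj n Ω xb = ub := proj_eq_of_inner_sub_nonpos hΩc hΩconv hub fun u hu => by
    rw [hxu, real_inner_smul_left]
    exact mul_nonpos_of_nonneg_of_nonpos ht (hΩhalf u hu)
  refine ⟨hΘxb, hΩxb, ?_⟩
  rw [hf, hf, infDist_eq_norm_sub_of_proj_eq hΩc ⟨ub, hub⟩ hΩxb,
    infDist_eq_norm_sub_of_proj_eq hΘc hΘ hΘxb, Metric.infDist_zero_of_mem hub,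
    infDist_eq_norm_sub_of_proj_eq hΘc hΘ hvb.symm, hxu, hxv, norm_smul, norm_smul,
    Real.norm_of_nonneg ht, Real.norm_of_nonneg (by linarith)]
  ring

theorem ray_points_properties (n : ℕ)
    (Ω Θ : Set (EuclideanSpace ℝ (Fin n)))
    (hΩ : Ω.Nonempty) (hΩc : IsClosed Ω) (hΩconv : Convex ℝ Ω)
    (hΘ : Θ.Nonempty) (hΘc : IsClosed Θ) (hΘconv : Convex ℝ Θ)
    (hdiff : (Ω \ Θ).Nonempty)
    (f : EuclideanSpace ℝ (Fin n) → ℝ)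
    (hf : ∀ x, f x = Metric.infDist x Ω - Metric.infDist x Θ)
    (ub : EuclideanSpace ℝ (Fin n)) (hub : ub ∈ Ω)
    (hmax : ∀ u ∈ Ω, Metric.infDist u Θ ≤ Metric.infDist ub Θ)
    (vb : EuclideanSpace ℝ (Fin n)) (hvb : vb = proj n Θ ub)
    (t : ℝ) (ht : 0 ≤ t)
    (xb : EuclideanSpace ℝ (Fin n)) (hxb : xb = ub + t • (ub - vb)) :
    proj n Θ xb = vb ∧ proj n Ω xb = ub ∧ f xb = f ub :=
  ray_points_properties_general n Ω Θ hΩc hΩconv hΘ hΘc hΘconv f hf ub hub hmax vb hvb t ht xb hxb
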